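/- arXiv:2409.11278 — 2 statements merged into one kernel-verified Lean document; each statement's English description precedes it below -/
import Mathlib

section
/- Let A : X → Sym(n, ℝ) be a continuous family of symmetric n×n real matrices over a topological space X such that A(x) is invertible for every x ∈ X. Then the map sending x to the orthogonal projection onto the sum of the negative eigenspaces of A(x) is continuous. -/
/-- The sum of the negative eigenspaces of an invertible symmetric matrix `A`,
as a subspace of Euclidean space. -/
noncomputable def negEigenspace {n : ℕ} (A : Matrix (Fin n) (Fin n) ℝ) :
    Submodule ℝ (EuclideanSpace ℝ (Fin n)) :=
  ⨆ μ ∈ Set.Iio (0 : ℝ), Module.End.eigenspace (Matrix.toEuclideanLin A) μ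

open Matrix

variable {n : ℕ}

noncomputable def matCLM (M : Matrix (Fin n) (Fin n) ℝ) :
    EuclideanSpace ℝ (Fin n) →L[ℝ] EuclideanSpace ℝ (Fin n) :=
  LinearMap.toContinuousLinearMap (Matrix.toEuclideanLin M)

lemma matCLM_apply (M : Matrix (Fin n) (Fin n) ℝ) (v : EuclideanSpace ℝ (Fin n)) :
    matCLM M v = Matrix.toEuclideanLin M v := rfl

lemma continuous_matCLM : Continuous (matCLM (n := n)) :=
  LinearMap.continuous_of_finiteDimensional
    ((LinearMap.toContinuousLinearMap :
        (EuclideanSpace ℝ (Fin n) →ₗ[ℝ] EuclideanSpace ℝ (Fin n)) ≃ₗ[ℝ] _).toLinearMap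
      ∘ₗ (Matrix.toEuclideanLin :
        Matrix (Fin n) (Fin n) ℝ ≃ₗ[ℝ] _).toLinearMap)

lemma matCLM_mul (M N : Matrix (Fin n) (Fin n) ℝ) :
    matCLM (M * N) = matCLM M * matCLM N := by
  ext v
  simp [matCLM_apply, Matrix.toEuclideanLin_apply, Matrix.mulVec_mulVec,
    ContinuousLinearMap.mul_apply]

lemma matCLM_one : matCLM (1 : Matrix (Fin n) (Fin n) ℝ) = 1 := by
  ext v i
  simp [matCLM_apply, Matrix.toEuclideanLin_apply, Matrix.one_mulVec]

lemma diag_opNorm_le {ι F : Type*} [Fintype ι] [NormedAddCommGroup F]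
    [InnerProductSpace ℝ F] (b : OrthonormalBasis ι ℝ F) (D : F →L[ℝ] F) (c : ι → ℝ)
    (h : ∀ i, D (b i) = c i • b i) {C : ℝ} (hC : 0 ≤ C) (hc : ∀ i, |c i| ≤ C) : ‖D‖ ≤ C := by
  refine D.opNorm_le_bound hC fun v => ?_
  set a : ι → ℝ := fun i => b.repr v i with ha
  have hv : v = ∑ i, a i • b i := (b.sum_repr v).symm
  have hDv : D v = ∑ i, (c i * a i) • b i := by
    rw [hv, map_sum]
    exact Finset.sum_congr rfl fun i _ => by
      rw [ContinuousLinearMap.map_smul, h i, smul_smul, mul_comm]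
  have h1 : ‖D v‖ ^ 2 = ∑ i, (c i * a i) ^ 2 := by
    rw [← real_inner_self_eq_norm_sq, hDv, b.orthonormal.inner_sum]
    simp [sq]
  have h2 : ‖v‖ ^ 2 = ∑ i, a i ^ 2 := by
    conv_lhs => rw [hv]
    rw [← real_inner_self_eq_norm_sq, b.orthonormal.inner_sum]
    simp [sq]
  have hle : ‖D v‖ ^ 2 ≤ (C * ‖v‖) ^ 2 := by
    rw [h1, mul_pow, h2, Finset.mul_sum]
    refine Finset.sum_le_sum fun i _ => ?_
    rw [mul_pow]
    have : c i ^ 2 ≤ C ^ 2 := sq_le_sq' (abs_le.mp (hc i)).1 (abs_le.mp (hc i)).2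
    exact mul_le_mul_of_nonneg_right this (sq_nonneg _)
  have := Real.sqrt_le_sqrt hle
  rwa [Real.sqrt_sq (norm_nonneg _), Real.sqrt_sq (by positivity)] at this



lemma key_estimate (M : Matrix (Fin n) (Fin n) ℝ) (hsym : M.IsSymm)
    (p : Polynomial ℝ) {δ : ℝ} (hδ : 0 ≤ δ)
    (h : ∀ μ : ℝ, Module.End.HasEigenvalue (Matrix.toEuclideanLin M) μ →
      μ ≠ 0 ∧ |(if μ < 0 then (1:ℝ) else 0) - p.eval μ| ≤ δ) :
    ‖(negEigenspace M).subtypeL.comp (Submodule.orthogonalProjectionOnto (negEigenspace M))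
      - ∑ k ∈ Finset.range (p.natDegree + 1), p.coeff k • matCLM M ^ k‖ ≤ δ := by
  classical
  have herm : M.IsHermitian := by
    rwa [Matrix.IsHermitian, Matrix.conjTranspose_eq_transpose_of_trivial]
  have hT : (Matrix.toEuclideanLin M).IsSymmetric :=
    Matrix.isHermitian_iff_isSymmetric.mp herm
  set T := Matrix.toEuclideanLin M with hTdef
  have hn : Module.finrank ℝ (EuclideanSpace ℝ (Fin n)) = n := finrank_euclideanSpace_fin
  set b := hT.eigenvectorBasis hn with hb
  set lam := hT.eigenvalues hn with hlam
  have heig : ∀ i, Module.End.HasEigenvector T (lam i) (b i) :=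
    fun i => hT.hasEigenvector_eigenvectorBasis hn i
  set S := negEigenspace M with hS
  set P : EuclideanSpace ℝ (Fin n) →L[ℝ] EuclideanSpace ℝ (Fin n) :=
    S.subtypeL.comp (Submodule.orthogonalProjectionOnto S) with hP
  set Q : EuclideanSpace ℝ (Fin n) →L[ℝ] EuclideanSpace ℝ (Fin n) :=
    ∑ k ∈ Finset.range (p.natDegree + 1), p.coeff k • matCLM M ^ k with hQ
  have hlam0 : ∀ i, lam i ≠ 0 := fun i =>
    (h _ (Module.End.hasEigenvalue_of_hasEigenvector (heig i))).1
  have hPb : ∀ i, P (b i) = (if lam i < 0 then (1:ℝ) else 0) • b i := by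
    intro i
    rcases (hlam0 i).lt_or_gt with hlt | hgt
    · have hmem : b i ∈ S :=
        Submodule.mem_iSup_of_mem (lam i) (Submodule.mem_iSup_of_mem hlt (heig i).1)
      rw [if_pos hlt, one_smul]
      show ((Submodule.orthogonalProjectionOnto S (b i) : S) : EuclideanSpace ℝ (Fin n)) = b i
      rw [show b i = ((⟨b i, hmem⟩ : S) : EuclideanSpace ℝ (Fin n)) from rfl,
        Submodule.orthogonalProjectionOnto_mem_subspace_eq_self]
    · have horth : b i ∈ Sᗮ := by
        have hle : S ≤ (Submodule.span ℝ {b i})ᗮ := by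
          refine iSup₂_le fun μ hμ => ?_
          intro w hw
          rw [Submodule.mem_orthogonal]
          intro u hu
          obtain ⟨a, rfl⟩ := Submodule.mem_span_singleton.mp hu
          have hne : lam i ≠ μ := ne_of_gt (lt_trans hμ hgt)
          have h0 : (inner ℝ (b i) w : ℝ) = 0 :=
            hT.orthogonalFamily_eigenspaces hne ⟨b i, (heig i).1⟩ ⟨w, hw⟩
          rw [inner_smul_left, h0]
          simp
        have hmono := Submodule.orthogonal_le hle
        exact hmono ((Submodule.span ℝ {b i}).le_orthogonal_orthogonal
          (Submodule.mem_span_singleton_self (b i)))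
      rw [if_neg (not_lt.mpr hgt.le), zero_smul]
      show ((Submodule.orthogonalProjectionOnto S (b i) : S) : EuclideanSpace ℝ (Fin n)) = 0
      rw [Submodule.orthogonalProjectionOnto_apply_of_mem_orthogonal horth,
        Submodule.coe_zero]
  have hpow : ∀ (k : ℕ) i, (matCLM M ^ k) (b i) = lam i ^ k • b i := by
    intro k i
    induction k with
    | zero => simp
    | succ k ih =>
      have hb1 : matCLM M (b i) = lam i • b i := Module.End.mem_eigenspace_iff.mp (heig i).1
      rw [pow_succ, ContinuousLinearMap.mul_apply, hb1, ContinuousLinearMap.map_smul, ih,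
        smul_smul, mul_comm, ← pow_succ]
  have hQb : ∀ i, Q (b i) = Polynomial.eval (lam i) p • b i := by
    intro i
    rw [hQ, ContinuousLinearMap.sum_apply]
    simp_rw [ContinuousLinearMap.smul_apply, hpow, smul_smul]
    rw [← Finset.sum_smul]
    congr 1
    rw [Polynomial.eval_eq_sum_range]
  have hDb : ∀ i, (P - Q) (b i)
      = ((if lam i < 0 then (1:ℝ) else 0) - Polynomial.eval (lam i) p) • b i := by
    intro i
    rw [ContinuousLinearMap.sub_apply, hPb, hQb, sub_smul]
  exact diag_opNorm_le b (P - Q) _ hDb hδ fun i =>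
    (h _ (Module.End.hasEigenvalue_of_hasEigenvector (heig i))).2
lemma eigenvalue_bounds {n : ℕ} (M : Matrix (Fin n) (Fin n) ℝ) (hM : IsUnit M) {μ : ℝ}
    (hμ : Module.End.HasEigenvalue (Matrix.toEuclideanLin M) μ) :
    1 ≤ |μ| * ‖LinearMap.toContinuousLinearMap (Matrix.toEuclideanLin M⁻¹)‖ ∧
      |μ| ≤ ‖LinearMap.toContinuousLinearMap (Matrix.toEuclideanLin M)‖ := by
  obtain ⟨v, hv⟩ := hμ.exists_hasEigenvector
  have hv0 : (0:ℝ) < ‖v‖ := norm_pos_iff.mpr hv.2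
  set T := LinearMap.toContinuousLinearMap (Matrix.toEuclideanLin M) with hT
  set Ti := LinearMap.toContinuousLinearMap (Matrix.toEuclideanLin M⁻¹) with hTi
  have hTv : T v = μ • v := Module.End.mem_eigenspace_iff.mp hv.1
  have hdet : IsUnit M.det := (Matrix.isUnit_iff_isUnit_det _).mp hM
  have hone : ∀ w, Ti (T w) = w := by
    intro w
    show Matrix.toEuclideanLin M⁻¹ (Matrix.toEuclideanLin M w) = w
    simp [Matrix.toEuclideanLin_apply, Matrix.mulVec_mulVec,
      Matrix.nonsing_inv_mul _ hdet, Matrix.one_mulVec]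
  constructor
  · have hvv : v = μ • Ti v := by
      have h' : Ti (T v) = v := hone v
      rw [hTv, ContinuousLinearMap.map_smul] at h'
      exact h'.symm
    have : ‖v‖ ≤ |μ| * (‖Ti‖ * ‖v‖) := by
      calc ‖v‖ = ‖μ • Ti v‖ := by rw [← hvv]
        _ = |μ| * ‖Ti v‖ := by rw [norm_smul, Real.norm_eq_abs]
        _ ≤ |μ| * (‖Ti‖ * ‖v‖) := by
            exact mul_le_mul_of_nonneg_left (Ti.le_opNorm v) (abs_nonneg μ)
    nlinarith
  · have : |μ| * ‖v‖ ≤ ‖T‖ * ‖v‖ := by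
      calc |μ| * ‖v‖ = ‖μ • v‖ := by rw [norm_smul, Real.norm_eq_abs]
        _ = ‖T v‖ := by rw [hTv]
        _ ≤ ‖T‖ * ‖v‖ := T.le_opNorm v
    exact le_of_mul_le_mul_right this hv0


/-- If `A : X → Sym(n,ℝ)` is a continuous family of invertible symmetric matrices, then the
orthogonal projection onto the sum of the negative eigenspaces of `A(x)` depends
continuously on `x`. -/
theorem stmt_12 {X : Type*} [TopologicalSpace X] {n : ℕ}
    (A : X → Matrix (Fin n) (Fin n) ℝ) (hcont : Continuous A)
    (hsymm : ∀ x, (A x).IsSymm) (hinv : ∀ x, IsUnit (A x)) :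
    Continuous (fun x =>
      ((negEigenspace (A x)).subtypeL.comp (Submodule.orthogonalProjectionOnto (negEigenspace (A x))) :
        EuclideanSpace ℝ (Fin n) →L[ℝ] EuclideanSpace ℝ (Fin n))) := by
  rcases Nat.eq_zero_or_pos n with hn0 | hn0
  · subst hn0
    have hsub : Subsingleton (EuclideanSpace ℝ (Fin 0)) :=
      ⟨fun a b => PiLp.ext fun i => Fin.elim0 i⟩
    exact continuous_of_const fun x y => ContinuousLinearMap.ext fun v =>
      @Subsingleton.elim _ hsub _ _
  set P : X → (EuclideanSpace ℝ (Fin n) →L[ℝ] EuclideanSpace ℝ (Fin n)) := fun x =>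
    (negEigenspace (A x)).subtypeL.comp (Submodule.orthogonalProjectionOnto (negEigenspace (A x))) with hPdef
  rw [continuous_iff_continuousAt]
  intro x₀
  rw [ContinuousAt, Metric.tendsto_nhds]
  intro ε hε
  set T : X → (EuclideanSpace ℝ (Fin n) →L[ℝ] EuclideanSpace ℝ (Fin n)) :=
    fun x => matCLM (A x) with hTdef
  have hTc : Continuous T := continuous_matCLM.comp hcont
  have hdet : ∀ x, IsUnit (A x).det := fun x => (Matrix.isUnit_iff_isUnit_det _).mp (hinv x)
  have hIc : ContinuousAt (fun x => (A x)⁻¹) x₀ := by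
    have h1 : ContinuousAt (Ring.inverse : ℝ → ℝ) (A x₀).det := by
      rw [Ring.inverse_eq_inv']
      exact continuousAt_inv₀ (hdet x₀).ne_zero
    exact (continuousAt_matrix_inv (A x₀) h1).comp hcont.continuousAt
  set Ti : X → (EuclideanSpace ℝ (Fin n) →L[ℝ] EuclideanSpace ℝ (Fin n)) :=
    fun x => matCLM (A x)⁻¹ with hTidef
  have hTic : ContinuousAt Ti x₀ := continuous_matCLM.continuousAt.comp hIc
  set c := ‖Ti x₀‖ with hcdef
  have hc0 : 0 < c := by
    rw [hcdef, norm_pos_iff]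
    intro h0
    have hone : ∀ w, Ti x₀ (T x₀ w) = w := by
      intro w
      show Matrix.toEuclideanLin (A x₀)⁻¹ (Matrix.toEuclideanLin (A x₀) w) = w
      simp [Matrix.toEuclideanLin_apply, Matrix.mulVec_mulVec,
        Matrix.nonsing_inv_mul _ (hdet x₀), Matrix.one_mulVec]
    have hv := hone (EuclideanSpace.single (⟨0, hn0⟩ : Fin n) (1:ℝ))
    rw [h0] at hv
    have := congrFun (congrArg (fun (w : EuclideanSpace ℝ (Fin n)) => (w : Fin n → ℝ)) hv)
      (⟨0, hn0⟩ : Fin n)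
    simp [EuclideanSpace.single_apply] at this
  set r := 1 / (2 * c) with hrdef
  have hr0 : 0 < r := by positivity
  set R := ‖T x₀‖ + 1 with hRdef
  set s : ℝ → ℝ := fun t => min 1 (max 0 (-t / r)) with hsdef
  have hscont : ContinuousOn s (Set.Icc (-R) R) := by
    apply Continuous.continuousOn
    fun_prop
  obtain ⟨p, hp⟩ := exists_polynomial_near_of_continuousOn (-R) R s hscont (ε/3)
    (by positivity)
  set Q : X → (EuclideanSpace ℝ (Fin n) →L[ℝ] EuclideanSpace ℝ (Fin n)) := fun x =>
    ∑ k ∈ Finset.range (p.natDegree + 1), p.coeff k • (T x) ^ k with hQdef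
  have hQc : Continuous Q :=
    continuous_finset_sum _ fun k _ => ((hTc.pow k).const_smul (p.coeff k))
  have hbound : ∀ x, ‖T x‖ ≤ R → ‖Ti x‖ ≤ 2 * c → ‖P x - Q x‖ ≤ ε / 3 := by
    intro x h1 h2
    refine key_estimate (A x) (hsymm x) p (by positivity) fun μ hμ => ?_
    obtain ⟨hlow, hhigh⟩ := eigenvalue_bounds (A x) (hinv x) hμ
    have hTinorm : 0 ≤ ‖Ti x‖ := norm_nonneg _
    have hrμ : r ≤ |μ| := by
      rw [hrdef]
      rw [div_le_iff₀ (by positivity)]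
      calc (1:ℝ) ≤ |μ| * ‖Ti x‖ := hlow
        _ ≤ |μ| * (2 * c) := mul_le_mul_of_nonneg_left h2 (abs_nonneg μ)
    have hμ0 : μ ≠ 0 := by
      intro h; rw [h] at hrμ; simp at hrμ; linarith
    refine ⟨hμ0, ?_⟩
    have hmem : μ ∈ Set.Icc (-R) R := by
      constructor
      · have := (abs_le.mp (hhigh.trans h1)).1; linarith [abs_le.mp (le_refl |μ|)]
      · exact (abs_le.mp (hhigh.trans h1)).2
    have hsμ : s μ = if μ < 0 then (1:ℝ) else 0 := by
      rcases lt_or_ge μ 0 with hneg | hpos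
      · rw [if_pos hneg]
        have hμler : 1 ≤ -μ / r := by
          rw [le_div_iff₀ hr0]
          have : r ≤ -μ := by rwa [abs_of_neg hneg] at hrμ
          linarith
        rw [hsdef]
        simp only []
        rw [max_eq_right (by linarith), min_eq_left hμler]
      · rw [if_neg (not_lt.mpr hpos)]
        have : -μ / r ≤ 0 := div_nonpos_of_nonpos_of_nonneg (by linarith) hr0.le
        rw [hsdef]
        simp only []
        rw [max_eq_left this, min_eq_right zero_le_one]
    rw [← hsμ, abs_sub_comm]
    exact (hp μ hmem).le
  have hevent : ∀ᶠ x in nhds x₀, ‖T x‖ ≤ R ∧ ‖Ti x‖ ≤ 2 * c ∧ ‖Q x - Q x₀‖ < ε / 3 := by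
    have e1 : ∀ᶠ x in nhds x₀, ‖T x‖ < R :=
      (hTc.norm.continuousAt (x := x₀)).eventually_lt_const (by rw [hRdef]; linarith)
    have e2 : ∀ᶠ x in nhds x₀, ‖Ti x‖ < 2 * c :=
      (hTic.norm).eventually_lt_const (by linarith)
    have e3 : ∀ᶠ x in nhds x₀, ‖Q x - Q x₀‖ < ε / 3 := by
      have h := Metric.tendsto_nhds.mp (hQc.continuousAt (x := x₀)) (ε/3) (by positivity)
      filter_upwards [h] with x hx
      rwa [dist_eq_norm] at hx
    filter_upwards [e1, e2, e3] with x h1 h2 h3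
    exact ⟨h1.le, h2.le, h3⟩
  filter_upwards [hevent] with x hx
  obtain ⟨h1, h2, h3⟩ := hx
  have e1 : ‖P x - Q x‖ ≤ ε / 3 := hbound x h1 h2
  have e2 : ‖P x₀ - Q x₀‖ ≤ ε / 3 :=
    hbound x₀ (by rw [hRdef]; linarith) (by linarith)
  have key : P x - P x₀ = (P x - Q x) + (Q x - Q x₀) + (Q x₀ - P x₀) := by abel
  rw [dist_eq_norm, key]
  calc ‖(P x - Q x) + (Q x - Q x₀) + (Q x₀ - P x₀)‖
      ≤ ‖P x - Q x‖ + ‖Q x - Q x₀‖ + ‖Q x₀ - P x₀‖ := norm_add₃_le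
    _ < ε/3 + ε/3 + ε/3 := by
        rw [norm_sub_rev (Q x₀)]
        exact add_lt_add_of_lt_of_le (add_lt_add_of_le_of_lt e1 h3) e2
    _ = ε := by ring
end

section
/- Let f(x₋, x₊) = ‖x₊‖² − ‖x₋‖² on E₋ × E₊ for finite-dimensional inner product spaces E₋, E₊, with Anosov flow Φ_t(x₋,x₊) = (eᵗx₋, e⁻ᵗx₊). Fix x₋ ∈ E₋ nonzero, a unit vector x̂₊ ∈ E₊, and r ≥ 0. Then the point φ(x₋, x̂₊, r) := ((r/g)·x₋, g·x̂₊), where g = √((1 + √(1 + 4r²‖x₋‖²))/2), lies in the level set f⁻¹(1), and the map (x₋, x̂₊, r) ↦ φ(x₋, x̂₊, r) is smooth on E₋ × S(E₊) × ℝ_{≥0} (smooth meaning it extends to a smooth map on an open neighborhood in E₋ × S(E₊) × ℝ). -/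
lemma aux_sq {a : ℝ} (ha : 0 ≤ a) :
    Real.sqrt ((1 + Real.sqrt (1 + 4 * a)) / 2) ^ 2 = (1 + Real.sqrt (1 + 4 * a)) / 2 := by
  apply Real.sq_sqrt
  have h1 : (0:ℝ) ≤ Real.sqrt (1 + 4 * a) := Real.sqrt_nonneg _
  linarith

/-- The point `φ(x₋, x̂₊, r) = ((r/g)·x₋, g·x̂₊)`, with
`g = √((1 + √(1 + 4r²‖x₋‖²))/2)`, lies in the level set `f⁻¹(1)` of
`f(x₋,x₊) = ‖x₊‖² − ‖x₋‖²` whenever `x₋ ≠ 0`, `‖x̂₊‖ = 1` and `r ≥ 0`; and the ambient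
formula defines a smooth map on `E₋ × E₊ × ℝ` (hence a smooth extension of the map on
`E₋ × S(E₊) × ℝ_{≥0}`). -/
theorem stmt_16 {Eneg Epos : Type*}
    [NormedAddCommGroup Eneg] [InnerProductSpace ℝ Eneg] [FiniteDimensional ℝ Eneg]
    [NormedAddCommGroup Epos] [InnerProductSpace ℝ Epos] [FiniteDimensional ℝ Epos] :
    (∀ (xneg : Eneg), xneg ≠ 0 → ∀ (xpos : Epos), ‖xpos‖ = 1 → ∀ r : ℝ, 0 ≤ r →
      ‖Real.sqrt ((1 + Real.sqrt (1 + 4 * r ^ 2 * ‖xneg‖ ^ 2)) / 2) • xpos‖ ^ 2 -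
        ‖(r / Real.sqrt ((1 + Real.sqrt (1 + 4 * r ^ 2 * ‖xneg‖ ^ 2)) / 2)) • xneg‖ ^ 2
        = 1) ∧
    ContDiff ℝ (⊤ : ℕ∞) (fun p : Eneg × Epos × ℝ =>
      (((p.2.2 / Real.sqrt ((1 + Real.sqrt (1 + 4 * p.2.2 ^ 2 * ‖p.1‖ ^ 2)) / 2)) • p.1,
        Real.sqrt ((1 + Real.sqrt (1 + 4 * p.2.2 ^ 2 * ‖p.1‖ ^ 2)) / 2) • p.2.1) :
        Eneg × Epos)) := by
  constructor
  · intro xneg hx xpos hxpos r hr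
    set a : ℝ := r ^ 2 * ‖xneg‖ ^ 2 with ha_def
    have ha : 0 ≤ a := by positivity
    have hs1 : (0:ℝ) ≤ Real.sqrt (1 + 4 * a) := Real.sqrt_nonneg _
    rw [show 4 * r ^ 2 * ‖xneg‖ ^ 2 = 4 * a from by rw [ha_def]; ring]
    set g : ℝ := Real.sqrt ((1 + Real.sqrt (1 + 4 * a)) / 2) with hg_def
    have hg2 : g ^ 2 = (1 + Real.sqrt (1 + 4 * a)) / 2 := aux_sq ha
    have hgpos : 0 < g := by
      rw [hg_def]
      apply Real.sqrt_pos.mpr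
      linarith
    have hs2 : Real.sqrt (1 + 4 * a) ^ 2 = 1 + 4 * a := Real.sq_sqrt (by linarith)
    have key : g ^ 2 * g ^ 2 - g ^ 2 = a := by nlinarith
    rw [norm_smul, norm_smul, hxpos]
    simp only [Real.norm_eq_abs, mul_one]
    rw [sq_abs, abs_div, abs_of_nonneg hr, abs_of_pos hgpos]
    have hgne : g ≠ 0 := ne_of_gt hgpos
    field_simp
    nlinarith
  · have hmap : ContDiff ℝ (⊤ : ℕ∞) (fun p : Eneg × Epos × ℝ =>
        Real.sqrt ((1 + Real.sqrt (1 + 4 * p.2.2 ^ 2 * ‖p.1‖ ^ 2)) / 2)) ∧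
        ∀ p : Eneg × Epos × ℝ,
          Real.sqrt ((1 + Real.sqrt (1 + 4 * p.2.2 ^ 2 * ‖p.1‖ ^ 2)) / 2) ≠ 0 := by
      have hA : ContDiff ℝ (⊤ : ℕ∞) (fun p : Eneg × Epos × ℝ =>
          1 + 4 * p.2.2 ^ 2 * ‖p.1‖ ^ 2) := by
        have h1 : ContDiff ℝ (⊤ : ℕ∞) (fun p : Eneg × Epos × ℝ => ‖p.1‖ ^ 2) :=
          contDiff_fst.norm_sq ℝ
        have h2 : ContDiff ℝ (⊤ : ℕ∞) (fun p : Eneg × Epos × ℝ => p.2.2) :=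
          contDiff_snd.snd
        exact contDiff_const.add (((contDiff_const.mul (h2.pow 2)).mul h1))
      have hApos : ∀ p : Eneg × Epos × ℝ, (0:ℝ) < 1 + 4 * p.2.2 ^ 2 * ‖p.1‖ ^ 2 := by
        intro p; positivity
      have hB : ContDiff ℝ (⊤ : ℕ∞) (fun p : Eneg × Epos × ℝ =>
          (1 + Real.sqrt (1 + 4 * p.2.2 ^ 2 * ‖p.1‖ ^ 2)) / 2) := by
        apply ContDiff.div_const
        apply contDiff_const.add
        rw [contDiff_iff_contDiffAt]
        intro p
        exact (Real.contDiffAt_sqrt (ne_of_gt (hApos p))).comp p hA.contDiffAt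
      have hBpos : ∀ p : Eneg × Epos × ℝ,
          (0:ℝ) < (1 + Real.sqrt (1 + 4 * p.2.2 ^ 2 * ‖p.1‖ ^ 2)) / 2 := by
        intro p
        have := Real.sqrt_nonneg (1 + 4 * p.2.2 ^ 2 * ‖p.1‖ ^ 2)
        linarith
      refine ⟨?_, fun p => ne_of_gt (Real.sqrt_pos.mpr (hBpos p))⟩
      rw [contDiff_iff_contDiffAt]
      intro p
      exact (Real.contDiffAt_sqrt (ne_of_gt (hBpos p))).comp p hB.contDiffAt
    obtain ⟨hg, hgne⟩ := hmap
    apply ContDiff.prodMk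
    · exact ((contDiff_snd.snd).div hg hgne).smul contDiff_fst
    · exact hg.smul contDiff_snd.fst
end
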